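/- arXiv:1405.5844 — 2 statements merged into one kernel-verified Lean document; each statement's English description precedes it below -/
import Mathlib

section
/- Let G = SU(2) and R = EG ×_G Maps(G, K(ℤ,7)) be the classifying space of pairs. The rationalization R_ℚ has exactly two nonzero homotopy groups: π₄(R_ℚ) ≅ ℚ² and π₇(R_ℚ) ≅ ℚ. -/
/-!
# Rational homotopy groups of the classifying space of pairs
(Bouwknegt–Evslin–Mathai, Theorem 3.5)

Let `G = SU(2)` and let `R = EG ×_G Maps(G, K(ℤ,7))` be the classifying space of pairs
`(P, H)`.  It fits in a homotopy fibration `K(ℤ,4) × K(ℤ,7) → R → BG`.  The rationalization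
`R_ℚ` of the simply connected space `R` satisfies `π_j(R_ℚ) = π_j(R) ⊗ ℚ`, and the claim is
that `R_ℚ` has exactly two non-zero homotopy groups, `π₄(R_ℚ) ≅ ℚ²` and `π₇(R_ℚ) ≅ ℚ`.

Rationalization and fibrations are not available in Mathlib, so the statement is formalized
against a structure recording the rational homotopy groups of the fiber
`K(ℤ,4) × K(ℤ,7)`, of the total space `R`, and of the base `BG` (with
`BG_ℚ ≃ K(ℤ,4)_ℚ`, so `π₄(BG) ⊗ ℚ ≅ ℚ` and all other rational homotopy groups vanish),
together with the long exact sequence of rational homotopy groups of the fibration. -/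
structure RationalHomotopyFibrationR where
  /-- `π_j(R_ℚ) = π_j(R) ⊗ ℚ`, the rational homotopy groups of the total space `R` -/
  piR : ℕ → Type
  /-- the rational homotopy groups of the base `BG = BSU(2)` -/
  piB : ℕ → Type
  /-- the rational homotopy groups of the fiber `Maps(G,K(ℤ,7)) ≃ K(ℤ,4) × K(ℤ,7)` -/
  piF : ℕ → Type
  [gR : ∀ j, AddCommGroup (piR j)] [gB : ∀ j, AddCommGroup (piB j)]
  [gF : ∀ j, AddCommGroup (piF j)]
  [mR : ∀ j, Module ℚ (piR j)] [mB : ∀ j, Module ℚ (piB j)]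
  [mF : ∀ j, Module ℚ (piF j)]
  /-- `π₄(BG) ⊗ ℚ ≅ ℚ`  (since `BSU(2)_ℚ ≃ K(ℤ,4)_ℚ`) -/
  piB4 : piB 4 ≃ₗ[ℚ] ℚ
  /-- all other rational homotopy groups of `BG` vanish -/
  piB_vanish : ∀ j : ℕ, j ≠ 4 → Subsingleton (piB j)
  /-- `π₄` of the fiber `K(ℤ,4) × K(ℤ,7)` is `ℚ` -/
  piF4 : piF 4 ≃ₗ[ℚ] ℚ
  /-- `π₇` of the fiber `K(ℤ,4) × K(ℤ,7)` is `ℚ` -/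
  piF7 : piF 7 ≃ₗ[ℚ] ℚ
  /-- all other rational homotopy groups of the fiber vanish -/
  piF_vanish : ∀ j : ℕ, j ≠ 4 → j ≠ 7 → Subsingleton (piF j)
  /-- the map `π_j(fiber) → π_j(R)` in the long exact sequence of the fibration -/
  fiberMap : ∀ j, piF j →ₗ[ℚ] piR j
  /-- the map `π_j(R) → π_j(BG)` in the long exact sequence of the fibration -/
  baseMap : ∀ j, piR j →ₗ[ℚ] piB j
  /-- the connecting map `π_{j+1}(BG) → π_j(fiber)` -/
  boundary : ∀ j, piB (j + 1) →ₗ[ℚ] piF j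
  /-- exactness of `π_j(F) → π_j(R) → π_j(BG)` -/
  exact_at_R : ∀ j, Function.Exact (fiberMap j) (baseMap j)
  /-- exactness of `π_{j+1}(R) → π_{j+1}(BG) → π_j(F)` -/
  exact_at_B : ∀ j, Function.Exact (baseMap (j + 1)) (boundary j)
  /-- exactness of `π_{j+1}(BG) → π_j(F) → π_j(R)` -/
  exact_at_F : ∀ j, Function.Exact (boundary j) (fiberMap j)

attribute [instance] RationalHomotopyFibrationR.gR RationalHomotopyFibrationR.gB
  RationalHomotopyFibrationR.gF RationalHomotopyFibrationR.mR
  RationalHomotopyFibrationR.mB RationalHomotopyFibrationR.mF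

/-!
The long exact sequence of the fibration `K(ℤ,4) × K(ℤ,7) → R → BG` collapses rationally:
since `BG_ℚ` is concentrated in degree `4` and the fiber in degrees `4` and `7`, exactness gives
`π₇(R_ℚ) ≅ π₇(F_ℚ)`, kills `π_j(R_ℚ)` for `j ≠ 4, 7`, and leaves the short exact sequence
`0 → π₄(F_ℚ) → π₄(R_ℚ) → π₄(BG_ℚ) → 0`, which splits because `ℚ`-vector spaces are projective.
-/

namespace Function.Exact

variable {R M N P : Type*} [Ring R] [AddCommGroup M] [AddCommGroup N] [AddCommGroup P]
  [Module R M] [Module R N] [Module R P] {f : M →ₗ[R] N} {g : N →ₗ[R] P}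

lemma injective_of_subsingleton_left [Subsingleton M] (h : Exact f g) : Injective g :=
  (LinearMap.injective_iff_eq_zero_of_exact h).mpr (Subsingleton.elim _ _)

lemma surjective_of_subsingleton_right [Subsingleton P] (h : Exact f g) : Surjective f :=
  (LinearMap.surjective_iff_eq_zero_of_exact h).mpr (Subsingleton.elim _ _)

lemma subsingleton_of_subsingleton [Subsingleton M] [Subsingleton P] (h : Exact f g) :
    Subsingleton N :=
  h.surjective_of_subsingleton_right.subsingleton

lemma nonempty_linearEquiv_prod [Module.Projective R P] (h : Exact f g) (hf : Injective f)
    (hg : Surjective g) : Nonempty (N ≃ₗ[R] M × P) :=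
  let ⟨s, hs⟩ := g.exists_rightInverse_of_surjective (LinearMap.range_eq_top.mpr hg)
  ⟨(h.splitSurjectiveEquiv hf ⟨s, hs⟩).1⟩

end Function.Exact

/-- **The rationalization `R_ℚ` of the classifying space of pairs has exactly two non-zero
homotopy groups: `π₄(R_ℚ) ≅ ℚ²` and `π₇(R_ℚ) ≅ ℚ`** (Bouwknegt–Evslin–Mathai,
Theorem 3.5). -/
theorem rational_homotopy_of_R (D : RationalHomotopyFibrationR) :
    Nonempty (D.piR 4 ≃ₗ[ℚ] (ℚ × ℚ)) ∧
    Nonempty (D.piR 7 ≃ₗ[ℚ] ℚ) ∧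
    ∀ j : ℕ, j ≠ 4 → j ≠ 7 → Subsingleton (D.piR j) := by
  have := D.piB_vanish 5 (by norm_num)
  have := D.piB_vanish 7 (by norm_num)
  have := D.piB_vanish 8 (by norm_num)
  have := D.piF_vanish 3 (by norm_num) (by norm_num)
  refine ⟨?_, ?_, fun j h4 h7 => ?_⟩
  · obtain ⟨e⟩ := (D.exact_at_R 4).nonempty_linearEquiv_prod
      (D.exact_at_F 4).injective_of_subsingleton_left
      (D.exact_at_B 3).surjective_of_subsingleton_right
    exact ⟨e.trans (D.piF4.prodCongr D.piB4)⟩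
  · have hbij : Function.Bijective (D.fiberMap 7) :=
      ⟨(D.exact_at_F 7).injective_of_subsingleton_left,
        (D.exact_at_R 7).surjective_of_subsingleton_right⟩
    exact ⟨(LinearEquiv.ofBijective _ hbij).symm.trans D.piF7⟩
  · have := D.piF_vanish j h4 h7
    have := D.piB_vanish j h4
    exact (D.exact_at_R j).subsingleton_of_subsingleton
end

section
/- Let M be a compact connected oriented 4-manifold and π : P → M a principal SU(2)-bundle. Then the Gysin pushforward π_* : H⁷(P;ℤ) → H⁴(M;ℤ) is an isomorphism. Consequently, for every pair (P, H) with H ∈ H⁷(P;ℤ) there is a unique (up to isomorphism) spherical T-dual pair (P̂, Ĥ): P̂ is the unique principal SU(2)-bundle with c₂(P̂) = π_*H and Ĥ = (π̂_*)^{-1}(c₂(P)), i.e. the T-duality map is (c₂(P), H) ↦ (π_*H, (π̂_*)^{-1}c₂(P)). -/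
/-!
# Spherical T-duality over a 4-manifold exists and is unique
(Bouwknegt–Evslin–Mathai, Section 3.5)

Let `M` be a compact connected oriented 4-manifold and `π : P → M` a principal
`SU(2)`-bundle.  Then the Gysin pushforward `π_* : H⁷(P;ℤ) → H⁴(M;ℤ)` is an isomorphism.
Consequently every pair `(P, H)` with `H ∈ H⁷(P;ℤ)` has a unique (up to isomorphism)
spherical T-dual pair `(P̂, Ĥ)`:  `P̂` is the unique principal `SU(2)`-bundle with
`c₂(P̂) = π_* H`, and `Ĥ = (π̂_*)⁻¹(c₂(P))`.

Bundles and cohomology are not available in Mathlib; the structure below records: the set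
of isomorphism classes of principal `SU(2)`-bundles over `M` (classified by
`c₂ ∈ H⁴(M;ℤ)`, which holds over a compact oriented 4-manifold), the groups `H⁷` of the
total spaces, and the Gysin sequence
`H⁷(M) → H⁷(P) → H⁴(M) → H⁸(M)` of each bundle, where `H⁷(M;ℤ) = H⁸(M;ℤ) = 0`
since `dim M = 4`. -/
structure FourManifoldSU2Data where
  /-- `H⁴(M;ℤ)` -/
  H4M : Type
  [g4 : AddCommGroup H4M]
  /-- `H⁷(M;ℤ)`, which vanishes since `dim M = 4` -/
  H7M : Type
  [g7M : AddCommGroup H7M]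
  h7M_trivial : Subsingleton H7M
  /-- `H⁸(M;ℤ)`, which vanishes since `dim M = 4` -/
  H8M : Type
  [g8M : AddCommGroup H8M]
  h8M_trivial : Subsingleton H8M
  /-- the set of isomorphism classes of principal `SU(2)`-bundles over `M` -/
  Bun : Type
  /-- the second Chern class of a principal `SU(2)`-bundle -/
  chern : Bun → H4M
  /-- over a compact oriented 4-manifold, principal `SU(2)`-bundles are classified up to
  isomorphism by their second Chern class -/
  chern_bij : Function.Bijective chern
  /-- `H⁷(P;ℤ)` of the total space of the bundle `b` -/
  H7 : Bun → Type
  [g7 : ∀ b, AddCommGroup (H7 b)]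
  /-- the pullback `π^* : H⁷(M) → H⁷(P)` -/
  pull7 : ∀ b, H7M →+ H7 b
  /-- the Gysin pushforward `π_* : H⁷(P) → H⁴(M)` (integration over the fiber) -/
  push7 : ∀ b, H7 b →+ H4M
  /-- the cup product `c₂(b) ∪ · : H⁴(M) → H⁸(M)` -/
  cupc2 : ∀ b : Bun, H4M →+ H8M
  /-- Gysin exactness at `H⁷(P)`: `Ker π_* = Im π^*` -/
  exact_at_P : ∀ (b : Bun) (x : H7 b), push7 b x = 0 ↔ ∃ y : H7M, pull7 b y = x
  /-- Gysin exactness at `H⁴(M)`: `Im π_* = Ker (c₂ ∪ ·)` -/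
  exact_at_M : ∀ (b : Bun) (y : H4M), cupc2 b y = 0 ↔ ∃ x : H7 b, push7 b x = y

attribute [instance] FourManifoldSU2Data.g4 FourManifoldSU2Data.g7M
  FourManifoldSU2Data.g8M FourManifoldSU2Data.g7

namespace Function.Exact

variable {A B C E : Type*}

theorem injective_of_subsingleton_left_s10 [AddGroup A] [AddGroup B] [AddGroup C] [Subsingleton A]
    {f : A →+ B} {g : B →+ C} (hfg : Exact f g) : Injective g := by
  refine (injective_iff_map_eq_zero g).2 fun x hx => ?_
  obtain ⟨a, rfl⟩ := (hfg x).1 hx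
  rw [Subsingleton.elim a 0, map_zero]

theorem surjective_of_subsingleton_right_s10 [Zero E] [Subsingleton E] {g : B → C} {h : C → E}
    (hgh : Exact g h) : Surjective g :=
  fun y => (hgh y).1 (Subsingleton.elim _ _)

theorem bijective_of_subsingleton [AddGroup A] [AddGroup B] [AddGroup C] [Zero E]
    [Subsingleton A] [Subsingleton E] {f : A →+ B} {g : B →+ C} {h : C → E}
    (hfg : Exact f g) (hgh : Exact g h) : Bijective g :=
  ⟨hfg.injective_of_subsingleton_left_s10, hgh.surjective_of_subsingleton_right_s10⟩

end Function.Exact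

theorem Sigma.existsUnique_of_bijective {ι X Y : Type*} {E : ι → Type*} {c : ι → X}
    {p : ∀ i, E i → Y} (hc : Function.Bijective c) (hp : ∀ i, Function.Bijective (p i))
    (x : X) (y : Y) : ∃! q : Σ i, E i, c q.1 = x ∧ p q.1 q.2 = y := by
  obtain ⟨i, hi⟩ := hc.2 x
  obtain ⟨e, he⟩ := (hp i).2 y
  refine ⟨⟨i, e⟩, ⟨hi, he⟩, ?_⟩
  rintro ⟨j, e'⟩ ⟨hj, he'⟩
  obtain rfl : j = i := hc.1 (hj.trans hi.symm)
  obtain rfl : e' = e := (hp j).1 (he'.trans he.symm)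
  rfl

/-- **Over a compact connected oriented 4-manifold, `π_* : H⁷(P;ℤ) → H⁴(M;ℤ)` is an
isomorphism and every pair `(P, H)` has a unique spherical T-dual**:  the T-duality map is
`(c₂(P), H) ↦ (π_* H, (π̂_*)⁻¹ c₂(P))`, i.e. the dual pair `(P̂, Ĥ)` is uniquely
determined by `c₂(P̂) = π_* H` and `π̂_* Ĥ = c₂(P)`. -/
theorem spherical_T_duality_dim_four (D : FourManifoldSU2Data) :
    (∀ b : D.Bun, Function.Bijective (D.push7 b)) ∧
    ∀ (b : D.Bun) (H : D.H7 b),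
      ∃! q : Σ bhat : D.Bun, D.H7 bhat,
        D.chern q.1 = D.push7 b H ∧ D.push7 q.1 q.2 = D.chern b := by
  have := D.h7M_trivial
  have := D.h8M_trivial
  have hpush (b : D.Bun) : Function.Bijective (D.push7 b) :=
    Function.Exact.bijective_of_subsingleton (D.exact_at_P b) (D.exact_at_M b)
  exact ⟨hpush, fun b H => Sigma.existsUnique_of_bijective D.chern_bij hpush _ _⟩
end
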